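/- arXiv:2210.16042 — 4 statements merged into one kernel-verified Lean document; each statement's English description precedes it below -/
import Mathlib

section
/- Let V_y = F Σ_β F' + V_ε, where F is a T×k matrix with F'F/T = I_k, Σ_β is a symmetric positive definite k×k matrix, and V_ε is a symmetric positive semidefinite T×T matrix. Let M_F = I_T − (1/T) F F'. Then the columns of (1/√T)F span the eigenspace of V_y associated with its k largest eigenvalues if and only if (1) M_F V_ε F = 0, and (2) δ_k(T Σ_β + (1/T) F' V_ε F) > δ_1(M_F V_ε M_F). -/
open Matrix

noncomputable def delta {ι : Type*} [Fintype ι] [DecidableEq ι] (A : Matrix ι ι ℝ) (j : ℕ) : ℝ :=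
  if hA : A.IsHermitian then
    (Multiset.sort (Finset.univ.val.map hA.eigenvalues) (· ≤ ·)).getD (Fintype.card ι - j) 0
  else 0

/-!
Since `F'F = T I`, the matrix `M_F = I - FF'/T` is the projection killing the range of `F`.
It therefore annihilates the factor part `F Σ_β F'` of `V_y`, so that
`M_F V_y M_F = M_F V_ε M_F` and `(1/T) F' V_y F = T Σ_β + (1/T) F' V_ε F`, while the range
of `F` is `V_y`-invariant exactly when `M_F V_y F = M_F V_ε F` vanishes. The two sides of the
equivalence thus match condition by condition.
-/

section ComplProj

variable {K m n p : Type*} [Field K] [Fintype m] [Fintype n] [DecidableEq m] [DecidableEq n]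
  {F : Matrix m n K} {c : K}

theorem compl_proj_mul_self (hF : Fᵀ * F = c • 1) (hc : c ≠ 0) :
    (1 - c⁻¹ • (F * Fᵀ)) * F = 0 := by
  rw [Matrix.sub_mul, Matrix.one_mul, Matrix.smul_mul, Matrix.mul_assoc, hF, Matrix.mul_smul,
    Matrix.mul_one, smul_smul, inv_mul_cancel₀ hc, one_smul, sub_self]

theorem exists_eq_mul_iff_compl_proj_mul_eq_zero (hF : Fᵀ * F = c • 1) (hc : c ≠ 0)
    (X : Matrix m p K) : (∃ A : Matrix n p K, X = F * A) ↔ (1 - c⁻¹ • (F * Fᵀ)) * X = 0 := by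
  constructor
  · rintro ⟨A, rfl⟩
    rw [← Matrix.mul_assoc, compl_proj_mul_self hF hc, Matrix.zero_mul]
  · intro h
    refine ⟨c⁻¹ • (Fᵀ * X), ?_⟩
    rwa [Matrix.sub_mul, Matrix.one_mul, sub_eq_zero, Matrix.smul_mul, Matrix.mul_assoc,
      ← Matrix.mul_smul] at h

theorem compl_proj_mul_factor_add (hF : Fᵀ * F = c • 1) (hc : c ≠ 0)
    (S : Matrix n n K) (V : Matrix m m K) :
    (1 - c⁻¹ • (F * Fᵀ)) * (F * S * Fᵀ + V) = (1 - c⁻¹ • (F * Fᵀ)) * V := by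
  rw [Matrix.mul_add, ← Matrix.mul_assoc, ← Matrix.mul_assoc, compl_proj_mul_self hF hc,
    Matrix.zero_mul, Matrix.zero_mul, zero_add]

end ComplProj

theorem transpose_mul_factor_add_mul {K m n : Type*} [CommRing K] [Fintype m] [Fintype n]
    [DecidableEq n] {F : Matrix m n K} {c : K} (hF : Fᵀ * F = c • 1)
    (S : Matrix n n K) (V : Matrix m m K) :
    Fᵀ * (F * S * Fᵀ + V) * F = (c * c) • S + Fᵀ * V * F := by
  rw [Matrix.mul_add, Matrix.add_mul, ← Matrix.mul_assoc, ← Matrix.mul_assoc,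
    Matrix.mul_assoc _ Fᵀ F, hF]
  simp only [Matrix.smul_mul, Matrix.mul_smul, Matrix.one_mul, Matrix.mul_one, smul_smul]

/-- "The columns of `F/√T` span the top-`k` eigenspace of `V_y`" is encoded as: the range of `F`
is `V_y`-invariant, and the eigenvalues of `V_y` there (those of `F'V_yF/T`) strictly dominate
those on its orthogonal complement (those of `M_F V_y M_F`). -/
theorem stmt_5_general (T k : ℕ) (hk : 0 < k) (hkT : k ≤ T)
    (F : Matrix (Fin T) (Fin k) ℝ) (Sb : Matrix (Fin k) (Fin k) ℝ)
    (Vε : Matrix (Fin T) (Fin T) ℝ)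
    (hF : Fᵀ * F = (T : ℝ) • 1)
    (Vy : Matrix (Fin T) (Fin T) ℝ) (hVy : Vy = F * Sb * Fᵀ + Vε)
    (MF : Matrix (Fin T) (Fin T) ℝ) (hMF : MF = 1 - (T : ℝ)⁻¹ • (F * Fᵀ)) :
    ((∃ A : Matrix (Fin k) (Fin k) ℝ, Vy * F = F * A) ∧
        delta ((T : ℝ)⁻¹ • (Fᵀ * Vy * F)) k > delta (MF * Vy * MF) 1) ↔
      (MF * Vε * F = 0 ∧
        delta ((T : ℝ) • Sb + (T : ℝ)⁻¹ • (Fᵀ * Vε * F)) k > delta (MF * Vε * MF) 1) := by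
  have hT : (T : ℝ) ≠ 0 := by exact_mod_cast (hk.trans_le hkT).ne'
  have hMFVy : MF * Vy = MF * Vε := by rw [hMF, hVy, compl_proj_mul_factor_add hF hT]
  have hFVyF : (T : ℝ)⁻¹ • (Fᵀ * Vy * F) = (T : ℝ) • Sb + (T : ℝ)⁻¹ • (Fᵀ * Vε * F) := by
    rw [hVy, transpose_mul_factor_add_mul hF, smul_add, smul_smul, ← mul_assoc,
      inv_mul_cancel₀ hT, one_mul]
  rw [hFVyF, hMFVy]
  refine and_congr ?_ Iff.rfl
  rw [exists_eq_mul_iff_compl_proj_mul_eq_zero hF hT, ← hMF, ← Matrix.mul_assoc, hMFVy]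

/-- with `V_y = F Σ_β F' + V_ε`, the columns of `(1/√T)F` span the
eigenspace of `V_y` associated with its `k` largest eigenvalues (i.e. the range of
`F` is `V_y`-invariant and the eigenvalues of `V_y` on that range, namely those of
`(1/T)F'V_yF`, strictly dominate those on its orthogonal complement, namely those of
`M_F V_y M_F`) if and only if (1) `M_F V_ε F = 0` and
(2) `δ_k(TΣ_β + (1/T)F'V_εF) > δ_1(M_F V_ε M_F)`. -/
theorem stmt_5 (T k : ℕ) (hk : 0 < k) (hkT : k ≤ T)
    (F : Matrix (Fin T) (Fin k) ℝ) (Sb : Matrix (Fin k) (Fin k) ℝ)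
    (Vε : Matrix (Fin T) (Fin T) ℝ)
    (hF : Fᵀ * F = (T : ℝ) • 1)
    (hSb : Sb.PosDef) (hVε : Vε.PosSemidef)
    (Vy : Matrix (Fin T) (Fin T) ℝ) (hVy : Vy = F * Sb * Fᵀ + Vε)
    (MF : Matrix (Fin T) (Fin T) ℝ) (hMF : MF = 1 - (T : ℝ)⁻¹ • (F * Fᵀ)) :
    ((∃ A : Matrix (Fin k) (Fin k) ℝ, Vy * F = F * A) ∧
        delta ((T : ℝ)⁻¹ • (Fᵀ * Vy * F)) k > delta (MF * Vy * MF) 1) ↔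
      (MF * Vε * F = 0 ∧
        delta ((T : ℝ) • Sb + (T : ℝ)⁻¹ • (Fᵀ * Vε * F)) k > delta (MF * Vε * MF) 1) :=
  stmt_5_general T k hk hkT F Sb Vε hF Vy hVy MF hMF
end

section
/- Let Z* be a symmetric 2×2 random matrix with z₁₁, z₂₂ ~ N(0, 2q), z₁₂ ~ N(0, q) independent, and let a ∈ ℝ. Then (δ₁(a e₁e₁' + Z*) − δ₂(a e₁e₁' + Z*))² / (4q) follows a non-central chi-square distribution with 2 degrees of freedom and non-centrality parameter a²/(4q). -/
/-!
For a symmetric 2 × 2 matrix the squared eigenvalue gap is `tr² - 4 det`, which for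
`a e₁e₁' + Z*` equals `(z₁₁ - z₂₂ + a)² + 4 z₁₂²`. Divided by `4q` this is `(U + a / √(4q))² + V²`
with `U = (z₁₁ - z₂₂) / √(4q)` and `V = z₁₂ / √q`: independent standard normals, since a difference
of independent centred Gaussians is Gaussian with the sum of the variances. The sign of `a` does not
matter because `-U` is again standard normal.
-/

open Matrix MeasureTheory ProbabilityTheory

/-- The non-central chi-square distribution with 2 degrees of freedom and
non-centrality parameter `l ≥ 0`: the law of `(W₁ + √l)² + W₂²` for independent
standard normals `W₁, W₂`. -/
noncomputable def ncChiSq2 (l : ℝ) : Measure ℝ :=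
  Measure.map (fun p : ℝ × ℝ => (p.1 + Real.sqrt l) ^ 2 + p.2 ^ 2)
    ((gaussianReal 0 1).prod (gaussianReal 0 1))

open scoped NNReal

theorem Multiset.sort_pair_of_le {α : Type*} [LinearOrder α] {a b : α} (h : a ≤ b) :
    Multiset.sort {a, b} (· ≤ ·) = [a, b] := by
  rw [Multiset.insert_eq_cons, Multiset.sort_cons _ _ _ (by simpa), Multiset.sort_singleton]

theorem delta_one_sub_delta_two {A : Matrix (Fin 2) (Fin 2) ℝ} (hA : A.IsHermitian) :
    delta A 1 - delta A 2 = |hA.eigenvalues 0 - hA.eigenvalues 1| := by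
  have huniv : Finset.univ.val.map hA.eigenvalues = {hA.eigenvalues 0, hA.eigenvalues 1} := rfl
  simp only [delta, dif_pos hA, huniv, Fintype.card_fin]
  rcases le_total (hA.eigenvalues 0) (hA.eigenvalues 1) with h | h
  · rw [Multiset.sort_pair_of_le h, abs_of_nonpos (sub_nonpos.2 h)]
    simp
  · rw [Multiset.pair_comm, Multiset.sort_pair_of_le h, abs_of_nonneg (sub_nonneg.2 h)]
    simp

theorem sq_delta_one_sub_delta_two {A : Matrix (Fin 2) (Fin 2) ℝ} (hA : A.IsHermitian) :
    (delta A 1 - delta A 2) ^ 2 = A.trace ^ 2 - 4 * A.det := by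
  rw [delta_one_sub_delta_two hA, sq_abs, hA.trace_eq_sum_eigenvalues, hA.det_eq_prod_eigenvalues]
  simp only [Fin.sum_univ_two, Fin.prod_univ_two, RCLike.ofReal_real_eq_id, id]
  ring

theorem sq_delta_one_sub_delta_two_fin_two_of (x y w : ℝ) :
    (delta !![x, y; y, w] 1 - delta !![x, y; y, w] 2) ^ 2 = (x - w) ^ 2 + 4 * y ^ 2 := by
  have hA : (!![x, y; y, w]).IsHermitian := by
    ext i j
    fin_cases i <;> fin_cases j <;> rfl
  rw [sq_delta_one_sub_delta_two hA, Matrix.trace_fin_two_of, Matrix.det_fin_two_of]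
  ring

namespace ProbabilityTheory

variable {Ω : Type*} {mΩ : MeasurableSpace Ω} {P : Measure Ω} {X Y : Ω → ℝ}

theorem IndepFun.hasLaw_sub_gaussianReal {m₁ m₂ : ℝ} {v₁ v₂ : ℝ≥0}
    (hX : HasLaw X (gaussianReal m₁ v₁) P) (hY : HasLaw Y (gaussianReal m₂ v₂) P)
    (hXY : IndepFun X Y P) : HasLaw (X - Y) (gaussianReal (m₁ - m₂) (v₁ + v₂)) P := by
  have h := (hXY.comp measurable_id measurable_neg).hasLaw_add hX (gaussianReal_neg hY)
  rwa [gaussianReal_conv_gaussianReal, ← sub_eq_add_neg] at h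

theorem hasLaw_div_sqrt_gaussianReal {v : ℝ≥0} (hv : v ≠ 0)
    (hX : HasLaw X (gaussianReal 0 v) P) : HasLaw (fun ω ↦ X ω / √v) (gaussianReal 0 1) P := by
  convert gaussianReal_div_const hX √v using 2
  · simp
  · ext
    simp [Real.sq_sqrt v.coe_nonneg, hv]

theorem hasLaw_ncChiSq2 (hX : HasLaw X (gaussianReal 0 1) P)
    (hY : HasLaw Y (gaussianReal 0 1) P) (hXY : IndepFun X Y P) (c : ℝ) :
    HasLaw (fun ω ↦ (X ω + c) ^ 2 + Y ω ^ 2) (ncChiSq2 (c ^ 2)) P := by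
  wlog hc : 0 ≤ c generalizing X c
  · convert this (X := -X) (by simpa using gaussianReal_neg hX)
      (hXY.comp measurable_neg measurable_id) (-c) (by linarith) using 2
    · simp only [Pi.neg_apply]; ring
    · ring
  have := hX.isProbabilityMeasure
  refine HasLaw.comp (Y := fun p : ℝ × ℝ ↦ (p.1 + c) ^ 2 + p.2 ^ 2) ⟨by fun_prop, ?_⟩
    (hXY.hasLaw_prod hX hY)
  rw [ncChiSq2, Real.sqrt_sq hc]

end ProbabilityTheory

theorem stmt_14_general {Ω : Type*} [MeasurableSpace Ω] (P0 : Measure Ω)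
    (q : NNReal) (hq : 0 < q) (a : ℝ)
    (z : Fin 3 → Ω → ℝ) (hzmeas : ∀ i, Measurable (z i))
    (hindep : iIndepFun z P0)
    (h11 : Measure.map (z 0) P0 = gaussianReal 0 (2 * q))
    (h22 : Measure.map (z 1) P0 = gaussianReal 0 (2 * q))
    (h12 : Measure.map (z 2) P0 = gaussianReal 0 q)
    (M : Ω → Matrix (Fin 2) (Fin 2) ℝ)
    (hM : M = fun ω => !![z 0 ω + a, z 2 ω; z 2 ω, z 1 ω]) :
    Measure.map (fun ω => (delta (M ω) 1 - delta (M ω) 2) ^ 2 / (4 * (q : ℝ))) P0 =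
      ncChiSq2 (a ^ 2 / (4 * (q : ℝ))) := by
  have hdiff : HasLaw (z 0 - z 1) (gaussianReal 0 (4 * q)) P0 := by
    convert (hindep.indepFun (by decide : (0 : Fin 3) ≠ 1)).hasLaw_sub_gaussianReal
      ⟨(hzmeas 0).aemeasurable, h11⟩ ⟨(hzmeas 1).aemeasurable, h22⟩ using 2 <;> ring
  have hU := hasLaw_div_sqrt_gaussianReal (by positivity) hdiff
  have hV := hasLaw_div_sqrt_gaussianReal hq.ne' ⟨(hzmeas 2).aemeasurable, h12⟩
  simp only [NNReal.coe_mul, NNReal.coe_ofNat, Pi.sub_apply] at hU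
  have hUV : IndepFun (fun ω ↦ (z 0 ω - z 1 ω) / √(4 * q)) (fun ω ↦ z 2 ω / √q) P0 :=
    (hindep.indepFun_prodMk hzmeas 0 1 2 (by decide) (by decide)).comp
      (φ := fun p : ℝ × ℝ ↦ (p.1 - p.2) / √(4 * q)) (ψ := (· / √q)) (by fun_prop) (by fun_prop)
  have hspacing : (fun ω ↦ (delta (M ω) 1 - delta (M ω) 2) ^ 2 / (4 * (q : ℝ))) =
      fun ω ↦ ((z 0 ω - z 1 ω) / √(4 * q) + a / √(4 * q)) ^ 2 + (z 2 ω / √q) ^ 2 := by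
    subst hM
    funext ω
    rw [sq_delta_one_sub_delta_two_fin_two_of, ← add_div, div_pow, div_pow,
      Real.sq_sqrt (by positivity), Real.sq_sqrt q.coe_nonneg]
    field_simp
    ring
  have hchi := hasLaw_ncChiSq2 hU hV hUV (a / √(4 * q))
  rw [div_pow, Real.sq_sqrt (by positivity)] at hchi
  rw [hspacing, hchi.map_eq]

/-- for a symmetric 2×2 random matrix with independent entries
`z₁₁, z₂₂ ~ N(0, 2q)`, `z₁₂ ~ N(0, q)` and `a ∈ ℝ`,
`(δ₁(a e₁e₁' + Z*) - δ₂(a e₁e₁' + Z*))² / (4q)` follows a non-central chi-square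
distribution with 2 degrees of freedom and non-centrality parameter `a²/(4q)`. -/
theorem stmt_14 {Ω : Type*} [MeasurableSpace Ω] (P0 : Measure Ω) [IsProbabilityMeasure P0]
    (q : NNReal) (hq : 0 < q) (a : ℝ)
    (z : Fin 3 → Ω → ℝ) (hzmeas : ∀ i, Measurable (z i))
    (hindep : iIndepFun z P0)
    (h11 : Measure.map (z 0) P0 = gaussianReal 0 (2 * q))
    (h22 : Measure.map (z 1) P0 = gaussianReal 0 (2 * q))
    (h12 : Measure.map (z 2) P0 = gaussianReal 0 q)
    (M : Ω → Matrix (Fin 2) (Fin 2) ℝ)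
    (hM : M = fun ω => !![z 0 ω + a, z 2 ω; z 2 ω, z 1 ω]) :
    Measure.map (fun ω => (delta (M ω) 1 - delta (M ω) 2) ^ 2 / (4 * (q : ℝ))) P0 =
      ncChiSq2 (a ^ 2 / (4 * (q : ℝ))) :=
  stmt_14_general P0 q hq a z hzmeas hindep h11 h22 h12 M hM
end

section
/- Let (s₁, s₂) have joint density ℓ(s₁, s₂) = (1/(4√(6π))) exp(−(s₁² + s₂² + s₁s₂)/6) s₁ s₂ (s₁ + s₂) on [0,∞)². Then the ratio r = s₁/s₂ has probability density g₃(r) = (27/8) (r + r²)/(1 + r + r²)^{5/2} for r ≥ 0. In particular g₃ integrates to 1. -/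
/-!
Substituting `x = r y` in the inner integral shows that the ratio `s₁ / s₂` of a pair with joint
density `f` has density `r ↦ ∫ |y| f(r y, y) dy`. For the GOE(3) spacing density and `r ≥ 0` the
integrand is `(r + r²) / (4√(6π)) · y⁴ exp(-(1 + r + r²) y² / 6)` on `y > 0`, a Gaussian moment
given by `Γ(5/2) = 3√π/4`; for `r < 0` it vanishes. Since the law of the ratio is a
probability measure, `g₃` integrates to `1`.
-/

open MeasureTheory Real Set
open scoped ENNReal

theorem integral_rpow_mul_exp_neg_mul_sq_Ioi {b s : ℝ} (hb : 0 < b) (hs : -1 < s) :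
    ∫ x in Ioi (0 : ℝ), x ^ s * exp (-b * x ^ 2) =
      Gamma ((s + 1) / 2) / (2 * b ^ ((s + 1) / 2)) := by
  have hsub := integral_comp_rpow_Ioi_of_pos (p := 2) two_pos
    (g := fun y => y ^ ((s + 1) / 2 - 1) * exp (-(b * y)) / 2)
  rw [integral_div, integral_rpow_mul_exp_neg_mul_Ioi (by linarith) hb] at hsub
  rw [div_rpow zero_le_one hb.le, one_rpow, div_mul_eq_mul_div, one_mul, div_div] at hsub
  rw [mul_comm 2, ← hsub]
  refine setIntegral_congr_fun measurableSet_Ioi fun x (hx : 0 < x) => ?_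
  have hpow : (x ^ (2 : ℝ)) ^ ((s + 1) / 2 - 1) = x ^ (s - 1) := by
    rw [← rpow_mul hx.le]; ring_nf
  rw [smul_eq_mul, hpow, show (2 : ℝ) - 1 = 1 by norm_num, rpow_one, rpow_two,
    rpow_sub_one hx.ne']
  field_simp

theorem lintegral_eq_abs_mul_lintegral_comp_mul_right {a : ℝ} (ha : a ≠ 0) {g : ℝ → ℝ≥0∞}
    (hg : Measurable g) : ∫⁻ x, g x = ENNReal.ofReal |a| * ∫⁻ r, g (r * a) := by
  conv_lhs => rw [← Real.smul_map_volume_mul_right ha]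
  rw [lintegral_smul_measure, lintegral_map hg (measurable_mul_const a), smul_eq_mul]

theorem map_div_withDensity_volume {f : ℝ × ℝ → ℝ≥0∞} (hf : Measurable f) :
    (volume.withDensity f).map (fun p => p.1 / p.2) =
      volume.withDensity fun r => ∫⁻ y, ENNReal.ofReal |y| * f (r * y, y) := by
  have hq : Measurable fun p : ℝ × ℝ => p.1 / p.2 := by fun_prop
  ext s hs
  set A := (fun p : ℝ × ℝ => p.1 / p.2) ⁻¹' s
  have hA : MeasurableSet A := hq hs
  rw [Measure.map_apply hq hs, withDensity_apply _ hA, withDensity_apply _ hs]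
  calc ∫⁻ p in A, f p
      = ∫⁻ y, ∫⁻ x, A.indicator f (x, y) := by
        rw [← lintegral_indicator hA, Measure.volume_eq_prod,
          lintegral_prod_symm _ ((hf.indicator hA).aemeasurable)]
    _ = ∫⁻ y, ∫⁻ r in s, ENNReal.ofReal |y| * f (r * y, y) := by
        refine lintegral_congr_ae ?_
        filter_upwards [volume.ae_ne 0] with y hy
        rw [lintegral_eq_abs_mul_lintegral_comp_mul_right hy (g := fun x => A.indicator f (x, y))
            ((hf.indicator hA).comp measurable_prodMk_right),
          lintegral_const_mul' _ _ ENNReal.ofReal_ne_top, ← lintegral_indicator hs]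
        refine congrArg _ (lintegral_congr fun r => ?_)
        by_cases hr : r ∈ s <;> simp [A, hr, mul_div_cancel_right₀ r hy]
    _ = ∫⁻ r in s, ∫⁻ y, ENNReal.ofReal |y| * f (r * y, y) :=
        lintegral_lintegral_swap (by fun_prop)

theorem integral_eq_one_of_isProbabilityMeasure_withDensity {α : Type*} [MeasurableSpace α]
    {μ : Measure α} {f : α → ℝ} (hf : 0 ≤ᵐ[μ] f) (hfm : AEStronglyMeasurable f μ)
    [IsProbabilityMeasure (μ.withDensity fun x => ENNReal.ofReal (f x))] :
    ∫ x, f x ∂μ = 1 := by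
  rw [integral_eq_lintegral_of_nonneg_ae hf hfm, ← setLIntegral_univ,
    ← withDensity_apply _ MeasurableSet.univ, measure_univ, ENNReal.toReal_one]

noncomputable def goe3SpacingDensity (p : ℝ × ℝ) : ℝ :=
  if 0 ≤ p.1 ∧ 0 ≤ p.2 then
    1 / (4 * √(6 * π)) * exp (-(p.1 ^ 2 + p.2 ^ 2 + p.1 * p.2) / 6) * (p.1 * p.2 * (p.1 + p.2))
  else 0

noncomputable def goe3RatioDensity (r : ℝ) : ℝ :=
  if 0 ≤ r then 27 / 8 * (r + r ^ 2) / (1 + r + r ^ 2) ^ ((5 : ℝ) / 2) else 0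

theorem measurable_goe3SpacingDensity : Measurable goe3SpacingDensity :=
  Measurable.ite ((measurableSet_Ici.preimage measurable_fst).inter
    (measurableSet_Ici.preimage measurable_snd)) (by fun_prop) measurable_const

theorem measurable_goe3RatioDensity : Measurable goe3RatioDensity :=
  Measurable.ite measurableSet_Ici (by fun_prop) measurable_const

theorem goe3RatioDensity_nonneg (r : ℝ) : 0 ≤ goe3RatioDensity r := by
  unfold goe3RatioDensity
  split_ifs <;> positivity

theorem abs_mul_goe3SpacingDensity_of_neg {r : ℝ} (hr : r < 0) (y : ℝ) :
    |y| * goe3SpacingDensity (r * y, y) = 0 := by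
  unfold goe3SpacingDensity
  split_ifs with h
  · obtain rfl : y = 0 := by nlinarith [h.1, h.2]
    simp
  · rw [mul_zero]

theorem abs_mul_goe3SpacingDensity_of_nonneg {r : ℝ} (hr : 0 ≤ r) (y : ℝ) :
    |y| * goe3SpacingDensity (r * y, y) = (Ioi 0).indicator (fun y =>
      (r + r ^ 2) / (4 * √(6 * π)) * (y ^ (4 : ℝ) * exp (-((1 + r + r ^ 2) / 6) * y ^ 2))) y := by
  unfold goe3SpacingDensity
  rcases lt_trichotomy y 0 with hy | rfl | hy
  · rw [if_neg fun h => hy.not_ge h.2, indicator_of_notMem (notMem_Ioi.2 hy.le), mul_zero]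
  · simp
  · rw [if_pos ⟨by positivity, hy.le⟩, indicator_of_mem (mem_Ioi.2 hy), abs_of_pos hy,
      show (4 : ℝ) = (4 : ℕ) by norm_num, rpow_natCast,
      show -((r * y) ^ 2 + y ^ 2 + r * y * y) / 6 = -((1 + r + r ^ 2) / 6) * y ^ 2 by ring]
    ring

theorem mul_gaussianMoment_eq_goe3RatioDensity {r : ℝ} (hr : 0 ≤ r) :
    (r + r ^ 2) / (4 * √(6 * π)) *
        (Gamma ((4 + 1) / 2) / (2 * ((1 + r + r ^ 2) / 6) ^ (((4 : ℝ) + 1) / 2))) =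
      goe3RatioDensity r := by
  have hq : 0 < 1 + r + r ^ 2 := by positivity
  have hGamma : Gamma ((4 + 1) / 2) = 3 / 4 * √π := by
    have := Real.Gamma_nat_add_one_add_half 1
    norm_num [Nat.doubleFactorial] at this ⊢
    rw [this]; ring
  have hsix : (6 : ℝ) ^ ((5 : ℝ) / 2) = 36 * √6 := by
    rw [show (5 : ℝ) / 2 = 2 + 1 / 2 by norm_num, rpow_add (by norm_num), rpow_two,
      ← sqrt_eq_rpow]
    norm_num
  rw [goe3RatioDensity, if_pos hr, hGamma, show ((4 : ℝ) + 1) / 2 = 5 / 2 by norm_num,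
    div_rpow hq.le (by norm_num), hsix, sqrt_mul (by norm_num)]
  field_simp
  ring

theorem lintegral_abs_mul_goe3SpacingDensity (r : ℝ) :
    ∫⁻ y, ENNReal.ofReal |y| * ENNReal.ofReal (goe3SpacingDensity (r * y, y)) =
      ENNReal.ofReal (goe3RatioDensity r) := by
  simp_rw [← ENNReal.ofReal_mul (abs_nonneg _)]
  rcases lt_or_ge r 0 with hr | hr
  · simp [abs_mul_goe3SpacingDensity_of_neg hr, goe3RatioDensity, hr.not_ge]
  have hb : 0 < (1 + r + r ^ 2) / 6 := by positivity
  have hmoment := integrableOn_rpow_mul_exp_neg_mul_sq hb (s := 4) (by norm_num)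
  simp_rw [abs_mul_goe3SpacingDensity_of_nonneg hr]
  rw [← ofReal_integral_eq_lintegral_ofReal
      (IntegrableOn.integrable_indicator (hmoment.const_mul _) measurableSet_Ioi)
      (.of_forall fun y => indicator_nonneg (fun y (hy : 0 < y) => by positivity) y),
    integral_indicator measurableSet_Ioi, integral_const_mul,
    integral_rpow_mul_exp_neg_mul_sq_Ioi hb (by norm_num),
    mul_gaussianMoment_eq_goe3RatioDensity hr]

theorem map_div_withDensity_goe3SpacingDensity :
    (volume.withDensity fun p => ENNReal.ofReal (goe3SpacingDensity p)).map
        (fun p => p.1 / p.2) =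
      volume.withDensity fun r => ENNReal.ofReal (goe3RatioDensity r) := by
  rw [map_div_withDensity_volume measurable_goe3SpacingDensity.ennreal_ofReal]
  simp_rw [lintegral_abs_mul_goe3SpacingDensity]

/-- if `(s₁, s₂)` has the GOE(3) spacings density
`ℓ(s₁,s₂) = (1/(4√(6π))) exp(-(s₁²+s₂²+s₁s₂)/6) s₁s₂(s₁+s₂)` on `[0,∞)²`, then the
ratio `r = s₁/s₂` has density `g₃(r) = (27/8)(r+r²)/(1+r+r²)^{5/2}` on `r ≥ 0`,
and `g₃` integrates to 1. -/
theorem stmt_16 {Ω : Type*} [MeasurableSpace Ω] (P0 : Measure Ω) [IsProbabilityMeasure P0]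
    (S : Ω → ℝ × ℝ) (hSmeas : Measurable S)
    (hlaw : Measure.map S P0 =
      (volume : Measure (ℝ × ℝ)).withDensity
        (fun p => ENNReal.ofReal
          (if 0 ≤ p.1 ∧ 0 ≤ p.2 then
            (1 / (4 * Real.sqrt (6 * Real.pi))) *
              Real.exp (-(p.1 ^ 2 + p.2 ^ 2 + p.1 * p.2) / 6) *
              (p.1 * p.2 * (p.1 + p.2))
          else 0))) :
    Measure.map (fun ω => (S ω).1 / (S ω).2) P0 =
      (volume : Measure ℝ).withDensity
        (fun r => ENNReal.ofReal
          (if 0 ≤ r then 27 / 8 * (r + r ^ 2) / (1 + r + r ^ 2) ^ ((5 : ℝ) / 2) else 0)) ∧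
      ∫ r in Set.Ici (0 : ℝ), 27 / 8 * (r + r ^ 2) / (1 + r + r ^ 2) ^ ((5 : ℝ) / 2) = 1 := by
  have hq : Measurable fun p : ℝ × ℝ => p.1 / p.2 := by fun_prop
  have hmap : Measure.map (fun ω => (S ω).1 / (S ω).2) P0 =
      volume.withDensity fun r => ENNReal.ofReal (goe3RatioDensity r) := by
    change Measure.map ((fun p : ℝ × ℝ => p.1 / p.2) ∘ S) P0 = _
    rw [← Measure.map_map hq hSmeas, hlaw]
    exact map_div_withDensity_goe3SpacingDensity
  refine ⟨hmap, ?_⟩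
  have : IsProbabilityMeasure (volume.withDensity fun r => ENNReal.ofReal (goe3RatioDensity r)) :=
    hmap ▸ Measure.isProbabilityMeasure_map (hq.comp hSmeas).aemeasurable
  have hindicator : goe3RatioDensity = (Ici 0).indicator fun r =>
      27 / 8 * (r + r ^ 2) / (1 + r + r ^ 2) ^ ((5 : ℝ) / 2) := by
    ext r
    simp [goe3RatioDensity, indicator_apply]
  rw [← integral_indicator measurableSet_Ici, ← hindicator]
  exact integral_eq_one_of_isProbabilityMeasure_withDensity
    (.of_forall goe3RatioDensity_nonneg) measurable_goe3RatioDensity.aestronglyMeasurable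
end

section
/- Let (s₁, s₂) have joint density ℓ(s₁, s₂) = (1/(4√(6π))) exp(−(s₁² + s₂² + s₁s₂)/6) s₁ s₂ (s₁ + s₂) on [0,∞)². Then s = s₁ + s₂ has probability density f₃(s) = (s/4) e^{−s²/8} [ (2Φ(s/(2√3)) − 1)(s²/4 − 3) + (3s/√(6π)) e^{−s²/24} ] for s ≥ 0, where Φ denotes the standard normal cumulative distribution function. -/
/-!
Substituting `s₁ = s/2 + v`, `s₂ = s/2 - v` turns the exponent of `ℓ` into `-s²/8 - v²/6` and
`s₁ s₂ (s₁ + s₂)` into `s (s²/4 - v²)`, so the density `∫ ℓ(x, s - x) dx` of `s₁ + s₂` is a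
multiple of `∫_{|v| ≤ s/2} (s²/4 - v²) e^{-v²/6} dv`. Integrating `v² e^{-v²/6}` by parts leaves
the boundary term `3 s e^{-s²/24}` and `3 ∫ e^{-v²/6}`, and the latter Gaussian integral is
`√(6π) (2Φ(s/(2√3)) - 1)`.
-/

open MeasureTheory ProbabilityTheory

/-- The standard normal cumulative distribution function `Φ`. -/
noncomputable def stdNormalCDF (x : ℝ) : ℝ :=
  ((gaussianReal 0 1) (Set.Iic x)).toReal

open Real Set
open scoped ENNReal

lemma stdNormalCDF_eq_integral (b : ℝ) :
    stdNormalCDF b = ∫ x in Iic b, gaussianPDFReal 0 1 x := by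
  rw [stdNormalCDF, gaussianReal_apply_eq_integral 0 one_ne_zero, ENNReal.toReal_ofReal]
  exact setIntegral_nonneg measurableSet_Iic fun x _ => gaussianPDFReal_nonneg 0 1 x

lemma stdNormalCDF_neg (b : ℝ) : stdNormalCDF (-b) = 1 - stdNormalCDF b := by
  have hupper : stdNormalCDF (-b) = ∫ x in Ioi b, gaussianPDFReal 0 1 x := by
    rw [← neg_neg b, ← integral_comp_neg_Iic, neg_neg, stdNormalCDF_eq_integral]
    simp only [gaussianPDFReal, sub_zero, neg_sq]
  rw [hupper, stdNormalCDF_eq_integral, ← integral_gaussianPDFReal_eq_one 0 one_ne_zero,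
    ← integral_add_compl measurableSet_Iic (integrable_gaussianPDFReal 0 1), compl_Iic]
  ring

lemma integral_symm_interval_gaussianPDFReal (b : ℝ) :
    ∫ x in -b..b, gaussianPDFReal 0 1 x = 2 * stdNormalCDF b - 1 := by
  have hint : ∀ c, IntegrableOn (gaussianPDFReal 0 1) (Iic c) := fun c =>
    (integrable_gaussianPDFReal 0 1).integrableOn
  rw [← intervalIntegral.integral_Iic_sub_Iic (hint _) (hint _), ← stdNormalCDF_eq_integral,
    ← stdNormalCDF_eq_integral, stdNormalCDF_neg]
  ring

lemma integral_symm_interval_exp_neg_sq_div {σ : ℝ} (hσ : 0 < σ) (a : ℝ) :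
    ∫ x in -a..a, exp (-x ^ 2 / (2 * σ ^ 2)) = σ * √(2 * π) * (2 * stdNormalCDF (a / σ) - 1) := by
  have hdensity : ∀ x, exp (-x ^ 2 / (2 * σ ^ 2)) = √(2 * π) * gaussianPDFReal 0 1 (x / σ) := by
    intro x
    have : √(2 * π) ≠ 0 := by positivity
    simp only [gaussianPDFReal, NNReal.coe_one, mul_one, sub_zero, div_pow]
    field_simp
  simp_rw [hdensity, intervalIntegral.integral_const_mul,
    intervalIntegral.integral_comp_div _ hσ.ne', neg_div, integral_symm_interval_gaussianPDFReal,
    smul_eq_mul]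
  ring

lemma integral_symm_interval_sub_sq_mul_exp_neg_sq_div {c : ℝ} (hc : c ≠ 0) (a b : ℝ) :
    ∫ v in -a..a, (b - v ^ 2) * exp (-v ^ 2 / c) =
      (b - c / 2) * (∫ v in -a..a, exp (-v ^ 2 / c)) + c * a * exp (-a ^ 2 / c) := by
  have hderiv : ∀ v : ℝ, HasDerivAt (fun v => c / 2 * v * exp (-v ^ 2 / c))
      ((c / 2 - v ^ 2) * exp (-v ^ 2 / c)) v := by
    intro v
    have hexp : HasDerivAt (fun v => exp (-v ^ 2 / c)) (exp (-v ^ 2 / c) * (-(2 * v) / c)) v :=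
      (((hasDerivAt_pow 2 v).fun_neg.div_const c).exp).congr_deriv (by ring)
    refine (((hasDerivAt_id' v).const_mul (c / 2)).fun_mul hexp).congr_deriv ?_
    field_simp
    ring
  have hsplit : ∀ v : ℝ, (b - v ^ 2) * exp (-v ^ 2 / c) =
      (b - c / 2) * exp (-v ^ 2 / c) + (c / 2 - v ^ 2) * exp (-v ^ 2 / c) := fun v => by ring
  have hgauss : Continuous fun v : ℝ => exp (-v ^ 2 / c) := by fun_prop
  have hderiv_cont : Continuous fun v : ℝ => (c / 2 - v ^ 2) * exp (-v ^ 2 / c) := by fun_prop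
  simp_rw [hsplit]
  rw [intervalIntegral.integral_add ((hgauss.const_mul _).intervalIntegrable _ _)
      (hderiv_cont.intervalIntegrable _ _), intervalIntegral.integral_const_mul,
    intervalIntegral.integral_eq_sub_of_hasDerivAt (fun v _ => hderiv v)
      (hderiv_cont.intervalIntegrable _ _), neg_sq]
  ring

theorem map_add_withDensity_prod {G : Type*} [MeasurableSpace G] [AddCommGroup G]
    [MeasurableAdd₂ G] [MeasurableSub₂ G] (μ ν : Measure G) [SFinite μ] [SFinite ν]
    [ν.IsAddRightInvariant] {f : G × G → ℝ≥0∞} (hf : Measurable f) :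
    ((μ.prod ν).withDensity f).map (fun z => z.1 + z.2) =
      ν.withDensity (fun s => ∫⁻ x, f (x, s - x) ∂μ) := by
  refine Measure.ext_of_lintegral _ fun φ hφ => ?_
  rw [lintegral_map hφ (by fun_prop), lintegral_withDensity_eq_lintegral_mul _ hf (by fun_prop),
    lintegral_withDensity_eq_lintegral_mul _ (by fun_prop) hφ, lintegral_prod _ (by fun_prop)]
  calc ∫⁻ x, ∫⁻ y, (f * fun z : G × G => φ (z.1 + z.2)) (x, y) ∂ν ∂μ
      = ∫⁻ x, ∫⁻ s, f (x, s - x) * φ s ∂ν ∂μ := by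
        refine lintegral_congr fun x => ?_
        rw [← lintegral_sub_right_eq_self _ x]
        simp only [Pi.mul_apply, add_sub_cancel]
    _ = ∫⁻ s, (∫⁻ x, f (x, s - x) ∂μ) * φ s ∂ν := by
        rw [lintegral_lintegral_swap (by fun_prop)]
        exact lintegral_congr fun s => lintegral_mul_const _ (by fun_prop)

lemma lintegral_ofReal_indicator_Icc {f : ℝ → ℝ} {a b : ℝ} (hab : a ≤ b)
    (hf : IntegrableOn f (Icc a b)) (hnonneg : ∀ x ∈ Icc a b, 0 ≤ f x) :
    ∫⁻ x, ENNReal.ofReal ((Icc a b).indicator f x) = ENNReal.ofReal (∫ x in a..b, f x) := by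
  rw [← ofReal_integral_eq_lintegral_ofReal ((integrable_indicator_iff measurableSet_Icc).2 hf)
      (ae_of_all _ fun x => indicator_nonneg hnonneg x),
    integral_indicator measurableSet_Icc, integral_Icc_eq_integral_Ioc,
    intervalIntegral.integral_of_le hab]

/-- `ℓ` of the statement; `goe3SpreadDensity` is `f₃`. -/
noncomputable def goe3SpacingsDensity (s₁ s₂ : ℝ) : ℝ :=
  1 / (4 * √(6 * π)) * exp (-(s₁ ^ 2 + s₂ ^ 2 + s₁ * s₂) / 6) * (s₁ * s₂ * (s₁ + s₂))

noncomputable def goe3SpreadDensity (s : ℝ) : ℝ :=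
  s / 4 * exp (-s ^ 2 / 8) * ((2 * stdNormalCDF (s / (2 * √3)) - 1) * (s ^ 2 / 4 - 3) +
    3 * s / √(6 * π) * exp (-s ^ 2 / 24))

lemma goe3SpacingsDensity_nonneg {s₁ s₂ : ℝ} (h₁ : 0 ≤ s₁) (h₂ : 0 ≤ s₂) :
    0 ≤ goe3SpacingsDensity s₁ s₂ := by
  unfold goe3SpacingsDensity
  positivity

lemma integral_goe3SpacingsDensity (s : ℝ) :
    ∫ x in (0 : ℝ)..s, goe3SpacingsDensity x (s - x) = goe3SpreadDensity s := by
  have hcentre : ∀ v, goe3SpacingsDensity (v + s / 2) (s - (v + s / 2)) =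
      s / (4 * √(6 * π)) * exp (-s ^ 2 / 8) * ((s ^ 2 / 4 - v ^ 2) * exp (-v ^ 2 / 6)) := by
    intro v
    have hexponent : -((v + s / 2) ^ 2 + (s - (v + s / 2)) ^ 2 + (v + s / 2) * (s - (v + s / 2)))
        / 6 = -s ^ 2 / 8 + -v ^ 2 / 6 := by ring
    rw [goe3SpacingsDensity, hexponent, exp_add]
    ring
  have hgauss : ∫ v in -(s / 2)..s / 2, exp (-v ^ 2 / 6) =
      √3 * √(2 * π) * (2 * stdNormalCDF (s / (2 * √3)) - 1) := by
    convert integral_symm_interval_exp_neg_sq_div (sqrt_pos.2 three_pos) (s / 2) using 3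
    · norm_num
    · rw [div_div]
  have hshift := intervalIntegral.integral_comp_add_right
    (fun x => goe3SpacingsDensity x (s - x)) (s / 2) (a := -(s / 2)) (b := s / 2)
  rw [neg_add_cancel, add_halves] at hshift
  rw [← hshift]
  simp only [hcentre]
  rw [intervalIntegral.integral_const_mul, integral_symm_interval_sub_sq_mul_exp_neg_sq_div (by norm_num), hgauss]
  have hsqrt : √(6 * π) = √3 * √(2 * π) := by
    rw [← sqrt_mul (by norm_num)]
    ring_nf
  have hexponent : -(s / 2) ^ 2 / 6 = -s ^ 2 / 24 := by ring
  rw [goe3SpreadDensity, hexponent, hsqrt]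
  field_simp
  ring

lemma lintegral_goe3SpacingsDensity (s : ℝ) :
    ∫⁻ x, ENNReal.ofReal (if 0 ≤ x ∧ 0 ≤ s - x then goe3SpacingsDensity x (s - x) else 0) =
      ENNReal.ofReal (if 0 ≤ s then goe3SpreadDensity s else 0) := by
  by_cases hs : 0 ≤ s
  · have hindicator : ∀ x, (if 0 ≤ x ∧ 0 ≤ s - x then goe3SpacingsDensity x (s - x) else 0) =
        (Icc 0 s).indicator (fun x => goe3SpacingsDensity x (s - x)) x := by
      intro x
      simp only [indicator, mem_Icc, sub_nonneg]
    have hcont : Continuous fun x => goe3SpacingsDensity x (s - x) := by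
      unfold goe3SpacingsDensity
      fun_prop
    simp only [hindicator]
    rw [if_pos hs, lintegral_ofReal_indicator_Icc hs hcont.integrableOn_Icc
      fun x hx => goe3SpacingsDensity_nonneg hx.1 (sub_nonneg.2 hx.2),
      integral_goe3SpacingsDensity]
  · have hempty : ∀ x, ¬(0 ≤ x ∧ 0 ≤ s - x) := fun x hx => hs (by linarith [hx.1, hx.2])
    simp only [hempty, hs, if_false, ENNReal.ofReal_zero, lintegral_zero]

theorem stmt_17_general {Ω : Type*} [MeasurableSpace Ω] (P0 : Measure Ω)
    (S : Ω → ℝ × ℝ) (hSmeas : Measurable S)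
    (hlaw : Measure.map S P0 =
      (volume : Measure (ℝ × ℝ)).withDensity
        (fun p => ENNReal.ofReal
          (if 0 ≤ p.1 ∧ 0 ≤ p.2 then
            (1 / (4 * Real.sqrt (6 * Real.pi))) *
              Real.exp (-(p.1 ^ 2 + p.2 ^ 2 + p.1 * p.2) / 6) *
              (p.1 * p.2 * (p.1 + p.2))
          else 0))) :
    Measure.map (fun ω => (S ω).1 + (S ω).2) P0 =
      (volume : Measure ℝ).withDensity
        (fun s => ENNReal.ofReal
          (if 0 ≤ s then
            s / 4 * Real.exp (-s ^ 2 / 8) *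
              ((2 * stdNormalCDF (s / (2 * Real.sqrt 3)) - 1) * (s ^ 2 / 4 - 3) +
                3 * s / Real.sqrt (6 * Real.pi) * Real.exp (-s ^ 2 / 24))
          else 0)) := by
  have hquadrant : MeasurableSet {p : ℝ × ℝ | 0 ≤ p.1 ∧ 0 ≤ p.2} :=
    (measurableSet_le measurable_const measurable_fst).inter
      (measurableSet_le measurable_const measurable_snd)
  rw [show (fun ω => (S ω).1 + (S ω).2) = (fun p : ℝ × ℝ => p.1 + p.2) ∘ S from rfl,
    ← Measure.map_map (by fun_prop) hSmeas, hlaw,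
    Measure.volume_eq_prod, map_add_withDensity_prod _ _
      ((Measurable.ite hquadrant (by fun_prop) measurable_const).ennreal_ofReal)]
  congr 1
  funext s
  exact lintegral_goe3SpacingsDensity s

/-- if `(s₁, s₂)` has the GOE(3) spacings density
`ℓ(s₁,s₂) = (1/(4√(6π))) exp(-(s₁²+s₂²+s₁s₂)/6) s₁s₂(s₁+s₂)` on `[0,∞)²`, then
`s = s₁ + s₂` has density
`f₃(s) = (s/4) e^{-s²/8} [(2Φ(s/(2√3)) - 1)(s²/4 - 3) + (3s/√(6π)) e^{-s²/24}]`
on `s ≥ 0`, where `Φ` is the standard normal cdf. -/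
theorem stmt_17 {Ω : Type*} [MeasurableSpace Ω] (P0 : Measure Ω) [IsProbabilityMeasure P0]
    (S : Ω → ℝ × ℝ) (hSmeas : Measurable S)
    (hlaw : Measure.map S P0 =
      (volume : Measure (ℝ × ℝ)).withDensity
        (fun p => ENNReal.ofReal
          (if 0 ≤ p.1 ∧ 0 ≤ p.2 then
            (1 / (4 * Real.sqrt (6 * Real.pi))) *
              Real.exp (-(p.1 ^ 2 + p.2 ^ 2 + p.1 * p.2) / 6) *
              (p.1 * p.2 * (p.1 + p.2))
          else 0))) :
    Measure.map (fun ω => (S ω).1 + (S ω).2) P0 =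
      (volume : Measure ℝ).withDensity
        (fun s => ENNReal.ofReal
          (if 0 ≤ s then
            s / 4 * Real.exp (-s ^ 2 / 8) *
              ((2 * stdNormalCDF (s / (2 * Real.sqrt 3)) - 1) * (s ^ 2 / 4 - 3) +
                3 * s / Real.sqrt (6 * Real.pi) * Real.exp (-s ^ 2 / 24))
          else 0)) :=
  stmt_17_general P0 S hSmeas hlaw
end
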